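/- Let K ⊂ ℝⁿ (n ≥ 3) be an origin-symmetric star body (compact, star-shaped about 0 with 0 interior, continuous Minkowski gauge). If for every unit vector ξ the section K ∩ ξ^⊥ is a centered ellipsoid (an ellipsoid centered at the origin in the hyperplane ξ^⊥), then K is a centered ellipsoid. -/

import Mathlib

open Metric Pointwise Module

private lemma mem_image_equiv' {H : Type*} [AddCommGroup H] [Module ℝ H]
    (φ : H ≃ₗ[ℝ] H) (s : Set H) (x : H) : x ∈ φ '' s ↔ φ.symm x ∈ s := by
  constructor
  · rintro ⟨u, hu, rfl⟩; simpa using hu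
  · intro h; exact ⟨φ.symm x, h, φ.apply_symm_apply x⟩

private lemma gauge_formula {n : ℕ} (K : Set (EuclideanSpace ℝ (Fin n)))
    (hK0 : (0 : EuclideanSpace ℝ (Fin n)) ∈ K)
    (H : Set (EuclideanSpace ℝ (Fin n)))
    (hHs : ∀ (r : ℝ), ∀ x ∈ H, r • x ∈ H)
    (φ : EuclideanSpace ℝ (Fin n) ≃ₗ[ℝ] EuclideanSpace ℝ (Fin n))
    (hφH : φ '' H = H)
    (hφE : K ∩ H = φ '' (closedBall 0 1 ∩ H))
    {x : EuclideanSpace ℝ (Fin n)} (hx : x ∈ H) :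
    sInf {r : ℝ | 0 ≤ r ∧ x ∈ r • K} = ‖φ.symm x‖ ∧ (x ∈ K ↔ ‖φ.symm x‖ ≤ 1) := by
  have hsymmH : ∀ y ∈ H, φ.symm y ∈ H := by
    intro y hy
    rw [← hφH] at hy
    rcases hy with ⟨u, hu, rfl⟩
    simpa using hu
  have hmemK : ∀ y ∈ H, (y ∈ K ↔ ‖φ.symm y‖ ≤ 1) := by
    intro y hy
    constructor
    · intro hyK
      have : y ∈ φ '' (closedBall 0 1 ∩ H) := hφE ▸ ⟨hyK, hy⟩
      rcases (mem_image_equiv' φ _ y).mp this with ⟨hb, -⟩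
      simpa [mem_closedBall_zero_iff] using hb
    · intro hn
      have : y ∈ φ '' (closedBall 0 1 ∩ H) := by
        rw [mem_image_equiv']
        exact ⟨mem_closedBall_zero_iff.mpr hn, hsymmH y hy⟩
      rw [← hφE] at this
      exact this.1
  refine ⟨?_, hmemK x hx⟩
  have hset : {r : ℝ | 0 ≤ r ∧ x ∈ r • K} = Set.Ici ‖φ.symm x‖ := by
    ext r
    simp only [Set.mem_setOf_eq, Set.mem_Ici]
    constructor
    · rintro ⟨hr0, hrK⟩
      rcases eq_or_lt_of_le hr0 with rfl | hr
      · have hx0 : x = 0 := by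
          rw [Set.zero_smul_set ⟨0, hK0⟩] at hrK
          simpa using hrK
        simp [hx0]
      · have h1 : r⁻¹ • x ∈ K := (Set.mem_smul_set_iff_inv_smul_mem₀ (ne_of_gt hr) K x).mp hrK
        have h2 : r⁻¹ • x ∈ H := hHs _ _ hx
        have h3 := (hmemK _ h2).mp h1
        rw [map_smul, norm_smul] at h3
        rw [norm_inv, Real.norm_eq_abs, abs_of_pos hr] at h3
        calc ‖φ.symm x‖ = r * (r⁻¹ * ‖φ.symm x‖) := by field_simp
        _ ≤ r * 1 := by exact mul_le_mul_of_nonneg_left h3 (le_of_lt hr)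
        _ = r := mul_one r
    · intro hr
      have hr0 : 0 ≤ r := le_trans (norm_nonneg _) hr
      refine ⟨hr0, ?_⟩
      rcases eq_or_lt_of_le hr0 with rfl | hrpos
      · have : φ.symm x = 0 := by
          rw [← norm_le_zero_iff]; exact hr
        have hx0 : x = 0 := by
          have := congrArg φ this
          simpa using this
        rw [Set.zero_smul_set ⟨0, hK0⟩, hx0]
        simp
      · rw [Set.mem_smul_set_iff_inv_smul_mem₀ (ne_of_gt hrpos)]
        have h2 : r⁻¹ • x ∈ H := hHs _ _ hx
        rw [hmemK _ h2, map_smul, norm_smul, norm_inv, Real.norm_eq_abs, abs_of_pos hrpos]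
        rw [inv_mul_le_iff₀ hrpos, mul_one]
        exact hr
  rw [hset, csInf_Ici]

private lemma exists_perp {n : ℕ} (hn : 3 ≤ n) (x y : EuclideanSpace ℝ (Fin n)) :
    ∃ ξ : EuclideanSpace ℝ (Fin n), ‖ξ‖ = 1 ∧
      inner ℝ x ξ = (0 : ℝ) ∧ inner ℝ y ξ = (0 : ℝ) := by
  classical
  set W : Submodule ℝ (EuclideanSpace ℝ (Fin n)) := Submodule.span ℝ {x, y} with hW
  have hWne : W ≠ ⊤ := by
    intro htop
    have h1 : finrank ℝ W ≤ ({x, y} : Set (EuclideanSpace ℝ (Fin n))).toFinset.card :=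
      finrank_span_le_card _
    have h2 : ({x, y} : Set (EuclideanSpace ℝ (Fin n))).toFinset.card ≤ 2 := by
      classical
      simpa using Finset.card_insert_le x {y}
    have h3 : finrank ℝ W = n := by
      rw [htop, finrank_top]
      simp [finrank_euclideanSpace_fin]
    omega
  have hbot : Wᗮ ≠ ⊥ := by
    intro hb
    exact hWne (Submodule.orthogonal_eq_bot_iff.mp hb)
  obtain ⟨v, hvW, hv0⟩ := Submodule.exists_mem_ne_zero_of_ne_bot hbot
  refine ⟨‖v‖⁻¹ • v, norm_smul_inv_norm hv0, ?_, ?_⟩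
  · rw [real_inner_smul_right]
    have : inner ℝ x v = (0 : ℝ) :=
      (Submodule.mem_orthogonal W v).mp hvW x (Submodule.subset_span (by simp))
    rw [this, mul_zero]
  · rw [real_inner_smul_right]
    have : inner ℝ y v = (0 : ℝ) :=
      (Submodule.mem_orthogonal W v).mp hvW y (Submodule.subset_span (by simp))
    rw [this, mul_zero]

/-- An origin-symmetric star body: compact, `0` interior, star-shaped about `0`,
with continuous Minkowski gauge. -/
structure IsStarBody {n : ℕ} (K : Set (EuclideanSpace ℝ (Fin n))) : Prop where
  compact : IsCompact K
  zero_mem_interior : (0 : EuclideanSpace ℝ (Fin n)) ∈ interior K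
  star_shaped : ∀ x ∈ K, segment ℝ 0 x ⊆ K
  gauge_continuous : Continuous fun x : EuclideanSpace ℝ (Fin n) =>
    sInf {r : ℝ | 0 ≤ r ∧ x ∈ r • K}

/-- `E` is a centered ellipsoid in the linear subspace `H` (viewed as a subset of `ℝⁿ`):
the image of the unit ball of `H` under an invertible linear map preserving `H`. -/
def IsCenteredEllipsoidIn {n : ℕ} (H E : Set (EuclideanSpace ℝ (Fin n))) : Prop :=
  ∃ φ : EuclideanSpace ℝ (Fin n) ≃ₗ[ℝ] EuclideanSpace ℝ (Fin n),
    φ '' H = H ∧ E = φ '' (closedBall 0 1 ∩ H)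

/-- Busemann: an origin-symmetric star body all of whose central
hyperplane sections are centered ellipsoids is a centered ellipsoid. -/
theorem ellipsoid_of_all_sections_ellipsoids (n : ℕ) (hn : 3 ≤ n)
    (K : Set (EuclideanSpace ℝ (Fin n)))
    (hK : IsStarBody K) (hKsym : K = -K)
    (hsec : ∀ ξ : EuclideanSpace ℝ (Fin n), ‖ξ‖ = 1 →
      IsCenteredEllipsoidIn {x | inner ℝ x ξ = (0 : ℝ)}
        (K ∩ {x | inner ℝ x ξ = (0 : ℝ)})) :
    ∃ φ : EuclideanSpace ℝ (Fin n) ≃ₗ[ℝ] EuclideanSpace ℝ (Fin n),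
      K = φ '' closedBall 0 1 := by
  classical
  set g : EuclideanSpace ℝ (Fin n) → ℝ :=
    fun x => sInf {r : ℝ | 0 ≤ r ∧ x ∈ r • K} with hgdef
  have hgcont : Continuous g := hK.gauge_continuous
  have hK0 : (0 : EuclideanSpace ℝ (Fin n)) ∈ K := interior_subset hK.zero_mem_interior
  have key : ∀ ξ : EuclideanSpace ℝ (Fin n), ‖ξ‖ = 1 →
      ∃ φ : EuclideanSpace ℝ (Fin n) ≃ₗ[ℝ] EuclideanSpace ℝ (Fin n),
        ∀ x, inner ℝ x ξ = (0 : ℝ) → (g x = ‖φ.symm x‖ ∧ (x ∈ K ↔ ‖φ.symm x‖ ≤ 1)) := by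
    intro ξ hξ
    obtain ⟨φ, hφH, hφE⟩ := hsec ξ hξ
    refine ⟨φ, fun x hx => ?_⟩
    have hHs : ∀ (r : ℝ), ∀ z ∈ {x : EuclideanSpace ℝ (Fin n) | inner ℝ x ξ = (0 : ℝ)},
        r • z ∈ {x : EuclideanSpace ℝ (Fin n) | inner ℝ x ξ = (0 : ℝ)} := by
      intro r z hz
      simp only [Set.mem_setOf_eq] at hz ⊢
      rw [real_inner_smul_left, hz, mul_zero]
    exact gauge_formula K hK0 _ hHs φ hφH hφE hx
  have hperp1 : ∀ x : EuclideanSpace ℝ (Fin n), ∃ ξ, ‖ξ‖ = 1 ∧ inner ℝ x ξ = (0 : ℝ) := by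
    intro x
    obtain ⟨ξ, h1, h2, -⟩ := exists_perp hn x x
    exact ⟨ξ, h1, h2⟩
  have gK : ∀ x, x ∈ K ↔ g x ≤ 1 := by
    intro x
    obtain ⟨ξ, hξ, hx⟩ := hperp1 x
    obtain ⟨φ, hφ⟩ := key ξ hξ
    rw [(hφ x hx).2, (hφ x hx).1]
  have gnonneg : ∀ x, 0 ≤ g x := by
    intro x
    obtain ⟨ξ, hξ, hx⟩ := hperp1 x
    obtain ⟨φ, hφ⟩ := key ξ hξ
    rw [(hφ x hx).1]
    exact norm_nonneg _
  have gpos : ∀ x, x ≠ 0 → 0 < g x := by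
    intro x hx0
    obtain ⟨ξ, hξ, hx⟩ := hperp1 x
    obtain ⟨φ, hφ⟩ := key ξ hξ
    rw [(hφ x hx).1]
    rw [norm_pos_iff]
    simp only [ne_eq, LinearEquiv.map_eq_zero_iff]
    exact hx0
  have g0 : g 0 = 0 := by
    obtain ⟨ξ, hξ, hx⟩ := hperp1 0
    obtain ⟨φ, hφ⟩ := key ξ hξ
    rw [(hφ 0 hx).1]
    simp
  have gneg : ∀ x, g (-x) = g x := by
    intro x
    obtain ⟨ξ, hξ, hx⟩ := hperp1 x
    obtain ⟨φ, hφ⟩ := key ξ hξ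
    have hnx : inner ℝ (-x) ξ = (0 : ℝ) := by rw [inner_neg_left, hx, neg_zero]
    rw [(hφ _ hnx).1, (hφ _ hx).1, map_neg, norm_neg]
  have gdouble : ∀ x, g (x + x) = 2 * g x := by
    intro x
    obtain ⟨ξ, hξ, hx⟩ := hperp1 x
    obtain ⟨φ, hφ⟩ := key ξ hξ
    have hxx : inner ℝ (x + x) ξ = (0 : ℝ) := by rw [inner_add_left, hx]; ring
    rw [(hφ _ hxx).1, (hφ _ hx).1, map_add, ← two_smul ℝ (φ.symm x), norm_smul]
    simp
  have pg : ∀ x y, g (x + y) ^ 2 + g (x - y) ^ 2 = 2 * g x ^ 2 + 2 * g y ^ 2 := by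
    intro x y
    obtain ⟨ξ, hξ, hx, hy⟩ := exists_perp hn x y
    obtain ⟨φ, hφ⟩ := key ξ hξ
    have hxy : inner ℝ (x + y) ξ = (0 : ℝ) := by rw [inner_add_left, hx, hy]; ring
    have hxy' : inner ℝ (x - y) ξ = (0 : ℝ) := by rw [inner_sub_left, hx, hy]; ring
    rw [(hφ _ hxy).1, (hφ _ hxy').1, (hφ _ hx).1, (hφ _ hy).1, map_add, map_sub]
    have := parallelogram_law_with_norm ℝ (φ.symm x) (φ.symm y)
    nlinarith [this]
  set Q : EuclideanSpace ℝ (Fin n) → EuclideanSpace ℝ (Fin n) → ℝ :=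
    fun x y => (g (x + y) ^ 2 - g (x - y) ^ 2) / 4 with hQdef
  have Qsymm : ∀ x y, Q x y = Q y x := by
    intro x y
    have h1 : x + y = y + x := by abel
    have h2 : x - y = -(y - x) := by abel
    simp only [hQdef, h1, h2, gneg]
  have Qzero : ∀ y, Q 0 y = 0 := by
    intro y
    have h2 : (0 : EuclideanSpace ℝ (Fin n)) - y = -y := by abel
    simp only [hQdef, zero_add, h2, gneg]
    ring
  have Qself : ∀ x, Q x x = g x ^ 2 := by
    intro x
    simp only [hQdef, sub_self, g0, gdouble]
    ring
  have Qadd2 : ∀ x z y, Q x y + Q z y = Q (x + z) (y + y) / 2 := by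
    intro x z y
    have h1 := pg (x + y) (z + y)
    have h2 := pg (x - y) (z - y)
    rw [show (x + y) + (z + y) = (x + z) + (y + y) by abel,
      show (x + y) - (z + y) = x - z by abel] at h1
    rw [show (x - y) + (z - y) = (x + z) - (y + y) by abel,
      show (x - y) - (z - y) = x - z by abel] at h2
    simp only [hQdef]
    linarith
  have Qtwo : ∀ x y, Q x (y + y) = 2 * Q x y := by
    intro x y
    have h := Qadd2 x 0 y
    simp only [Qzero, add_zero] at h
    linarith
  have Qadd : ∀ x z y, Q (x + z) y = Q x y + Q z y := by
    intro x z y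
    rw [Qadd2 x z y, Qtwo (x + z) y]
    ring
  have Qcont : ∀ y, Continuous fun x => Q x y := by
    intro y
    simp only [hQdef]
    exact (((hgcont.comp (continuous_id.add continuous_const)).pow 2).sub
      ((hgcont.comp (continuous_id.sub continuous_const)).pow 2)).div_const 4
  have Qsmul : ∀ (c : ℝ) x y, Q (c • x) y = c * Q x y := by
    intro c x y
    let A : EuclideanSpace ℝ (Fin n) →+ ℝ :=
      AddMonoidHom.mk' (fun x => Q x y) (fun a b => Qadd a b y)
    have h2 : ∀ z, (A.toRealLinearMap (Qcont y)) z = Q z y := fun z =>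
      congrFun (A.coe_toRealLinearMap (Qcont y)) z
    have h1 : (A.toRealLinearMap (Qcont y)) (c • x) = c • (A.toRealLinearMap (Qcont y)) x :=
      (A.toRealLinearMap (Qcont y)).map_smul c x
    rw [h2, h2] at h1
    simpa using h1
  let B : LinearMap.BilinForm ℝ (EuclideanSpace ℝ (Fin n)) :=
    LinearMap.mk₂ ℝ Q Qadd (fun c m m' => by simpa using Qsmul c m m')
      (fun m m' m'' => by rw [Qsymm, Qadd, Qsymm m' m, Qsymm m'' m])
      (fun c m m' => by rw [Qsymm, Qsmul, Qsymm]; simp)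
  have hBapp : ∀ x y, B x y = Q x y := fun x y => rfl
  have hBsymm : LinearMap.IsSymm B := by
    rw [LinearMap.isSymm_def]
    intro x y
    simp only [RingHom.id_apply, hBapp]
    exact Qsymm x y
  obtain ⟨v0, hv0⟩ := LinearMap.BilinForm.exists_orthogonal_basis hBsymm
  let e : Fin (finrank ℝ (EuclideanSpace ℝ (Fin n))) ≃ Fin n :=
    finCongr (by simp [finrank_euclideanSpace_fin])
  let v : Basis (Fin n) ℝ (EuclideanSpace ℝ (Fin n)) := v0.reindex e
  have hv : ∀ i j, i ≠ j → B (v i) (v j) = 0 := by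
    intro i j hij
    have hne : e.symm i ≠ e.symm j := fun h => hij (by simpa using congrArg e h)
    simpa [v, Function.onFun, LinearMap.IsOrtho, Module.Basis.reindex_apply] using hv0 hne
  have hBpos : ∀ x, x ≠ 0 → 0 < B x x := by
    intro x hx
    rw [hBapp, Qself]
    exact pow_pos (gpos x hx) 2
  have hd : ∀ i, 0 < B (v i) (v i) := fun i => hBpos _ (v.ne_zero i)
  let c : Fin n → ℝˣ := fun i => Units.mk0 (Real.sqrt (B (v i) (v i)))⁻¹
    (inv_ne_zero (Real.sqrt_pos.mpr (hd i)).ne')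
  let w : Basis (Fin n) ℝ (EuclideanSpace ℝ (Fin n)) := v.unitsSMul c
  have hw : ∀ i j, B (w i) (w j) = if i = j then 1 else 0 := by
    intro i j
    rw [show w i = (c i : ℝ) • v i from Basis.unitsSMul_apply i,
      show w j = (c j : ℝ) • v j from Basis.unitsSMul_apply j]
    rw [LinearMap.BilinForm.smul_left, LinearMap.BilinForm.smul_right]
    by_cases hij : i = j
    · subst hij
      simp only [if_pos rfl, c, Units.val_mk0]
      have hs := Real.mul_self_sqrt (hd i).le
      have hpos := Real.sqrt_pos.mpr (hd i)
      rw [← hs]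
      field_simp
      rw [if_pos trivial, mul_one, Real.sq_sqrt (sq_nonneg _)]
    · rw [hv i j hij, if_neg hij]
      ring
  have quad : ∀ x, g x ^ 2 = ∑ i, (w.repr x i) ^ 2 := by
    intro x
    have hx : B x x = g x ^ 2 := by rw [hBapp, Qself]
    rw [← hx]
    calc B x x = B (∑ i, w.repr x i • w i) (∑ j, w.repr x j • w j) := by rw [w.sum_repr x]
    _ = ∑ i, ∑ j, (w.repr x i) * ((w.repr x j) * B (w i) (w j)) := by
        rw [LinearMap.BilinForm.sum_left]
        refine Finset.sum_congr rfl fun i _ => ?_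
        rw [LinearMap.BilinForm.smul_left, LinearMap.BilinForm.sum_right, Finset.mul_sum]
        refine Finset.sum_congr rfl fun j _ => ?_
        rw [LinearMap.BilinForm.smul_right]
    _ = ∑ i, (w.repr x i) ^ 2 := by
        refine Finset.sum_congr rfl fun i _ => ?_
        rw [Finset.sum_eq_single i]
        · rw [hw i i, if_pos rfl]; ring
        · intro j _ hji
          rw [hw i j, if_neg (fun h => hji h.symm)]
          ring
        · intro h
          exact absurd (Finset.mem_univ i) h
  let ψ : EuclideanSpace ℝ (Fin n) ≃ₗ[ℝ] EuclideanSpace ℝ (Fin n) :=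
    w.equivFun.trans (WithLp.linearEquiv 2 ℝ (Fin n → ℝ)).symm
  have hψ : ∀ x i, ψ x i = w.repr x i := by intro x i; rfl
  have hnorm : ∀ x, ‖ψ x‖ ^ 2 = ∑ i, (w.repr x i) ^ 2 := by
    intro x
    rw [EuclideanSpace.norm_eq,
      Real.sq_sqrt (Finset.sum_nonneg fun i _ => sq_nonneg _)]
    refine Finset.sum_congr rfl fun i _ => ?_
    rw [hψ, Real.norm_eq_abs, sq_abs]
  have geq : ∀ x, g x = ‖ψ x‖ := by
    intro x
    have h2 : g x ^ 2 = ‖ψ x‖ ^ 2 := by rw [quad, hnorm]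
    have h3 := congrArg Real.sqrt h2
    rwa [Real.sqrt_sq (gnonneg x), Real.sqrt_sq (norm_nonneg _)] at h3
  refine ⟨ψ.symm, ?_⟩
  ext x
  have hx1 : x ∈ K ↔ ‖ψ x‖ ≤ 1 := by rw [gK x, geq x]
  rw [hx1]
  constructor
  · intro h
    exact ⟨ψ x, mem_closedBall_zero_iff.mpr h, by simp⟩
  · rintro ⟨u, hu, rfl⟩
    rw [show ψ (ψ.symm u) = u from ψ.apply_symm_apply u]
    exact mem_closedBall_zero_iff.mp hu
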